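/- arXiv:math/0005085 — 3 statements merged into one kernel-verified Lean document; each statement's English description precedes it below -/
import Mathlib

section
/- Let Γ be a diagram satisfying condition (1) of subprincipality: for every A ⊆ T with #A > 1, #E'_A ≥ 3. Then for any two subsets A, A' ⊆ T with #A > 1, #A' > 1, #E'_A = 3 and #E'_{A'} = 3, the sets A and A' are either disjoint, or one is contained in the other. -/
/-!
Write `∂S = #E'_S`. Since every edge has two endpoints, `∂` is submodular and posimodular,
and `∂X + ∂Y ≡ ∂(X ∪ Y) (mod 2)` for disjoint `X, Y`. If `A` and `A'` cross, each of
`A \ A'`, `A' \ A`, `A ∩ A'`, `A ∪ A'` has boundary at least `3` (condition (1), or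
trivalence for singletons), so posimodularity and submodularity force
`∂(A \ A') = ∂(A ∩ A') = 3`; but then
`∂(A \ A') + ∂(A ∩ A') = 6` and `∂A = 3` differ in parity.
-/

open Finset

section EdgeBoundary

variable {V : Type*} [DecidableEq V]

def edgeBoundary (E : Finset (Finset V)) (S : Finset V) : Finset (Finset V) :=
  E.filter fun e => (e ∩ S).card = 1

theorem card_pair_inter_eq_one_iff {u v : V} (huv : u ≠ v) (S : Finset V) :
    (({u, v} : Finset V) ∩ S).card = 1 ↔ (u ∈ S ↔ v ∉ S) := by
  by_cases hu : u ∈ S <;> by_cases hv : v ∈ S <;>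
    simp [insert_inter_of_mem, insert_inter_of_notMem, hu, hv, huv]

theorem edgeBoundary_singleton (E : Finset (Finset V)) (v : V) :
    edgeBoundary E {v} = E.filter (v ∈ ·) := by
  refine filter_congr fun e _ => ?_
  by_cases hv : v ∈ e <;> simp [hv, inter_singleton_of_mem, inter_singleton_of_notMem]

section TwoElementEdges

variable {E : Finset (Finset V)} (hE : ∀ e ∈ E, e.card = 2)
include hE

theorem card_edgeBoundary_inter_add_card_edgeBoundary_union_le (A B : Finset V) :
    (edgeBoundary E (A ∩ B)).card + (edgeBoundary E (A ∪ B)).card ≤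
      (edgeBoundary E A).card + (edgeBoundary E B).card := by
  simp only [edgeBoundary, card_filter, ← sum_add_distrib]
  refine sum_le_sum fun e he => ?_
  obtain ⟨u, v, huv, rfl⟩ := card_eq_two.mp (hE e he)
  simp only [card_pair_inter_eq_one_iff huv, mem_inter, mem_union]
  by_cases u ∈ A <;> by_cases u ∈ B <;> by_cases v ∈ A <;> by_cases v ∈ B <;> simp [*]

theorem card_edgeBoundary_sdiff_add_card_edgeBoundary_sdiff_le (A B : Finset V) :
    (edgeBoundary E (A \ B)).card + (edgeBoundary E (B \ A)).card ≤
      (edgeBoundary E A).card + (edgeBoundary E B).card := by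
  simp only [edgeBoundary, card_filter, ← sum_add_distrib]
  refine sum_le_sum fun e he => ?_
  obtain ⟨u, v, huv, rfl⟩ := card_eq_two.mp (hE e he)
  simp only [card_pair_inter_eq_one_iff huv, mem_sdiff]
  by_cases u ∈ A <;> by_cases u ∈ B <;> by_cases v ∈ A <;> by_cases v ∈ B <;> simp [*]

theorem card_edgeBoundary_add_card_edgeBoundary_of_disjoint {X Y : Finset V}
    (hXY : Disjoint X Y) :
    (edgeBoundary E X).card + (edgeBoundary E Y).card =
      (edgeBoundary E (X ∪ Y)).card +
        2 * (E.filter fun e => (e ∩ X).card = 1 ∧ (e ∩ Y).card = 1).card := by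
  simp only [edgeBoundary, card_filter, ← sum_add_distrib, mul_sum]
  refine sum_congr rfl fun e he => ?_
  obtain ⟨u, v, huv, rfl⟩ := card_eq_two.mp (hE e he)
  have hu : u ∈ X → u ∉ Y := fun h => disjoint_left.mp hXY h
  have hv : v ∈ X → v ∉ Y := fun h => disjoint_left.mp hXY h
  simp only [card_pair_inter_eq_one_iff huv, mem_union]
  by_cases u ∈ X <;> by_cases u ∈ Y <;> by_cases v ∈ X <;> by_cases v ∈ Y <;> simp_all

end TwoElementEdges

theorem three_le_card_edgeBoundary {T : Finset V} {E : Finset (Finset V)}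
    (hT : ∀ v ∈ T, (E.filter (fun e => v ∈ e)).card = 3)
    (hcond1 : ∀ A ⊆ T, 1 < A.card → 3 ≤ (edgeBoundary E A).card)
    {B : Finset V} (hB : B ⊆ T) (hB₀ : B.Nonempty) :
    3 ≤ (edgeBoundary E B).card := by
  obtain hB₁ | ⟨v, rfl⟩ := hB₀.exists_eq_singleton_or_nontrivial.symm
  · exact hcond1 B hB (one_lt_card_iff_nontrivial.mpr hB₁)
  · rw [edgeBoundary_singleton, hT v (hB (mem_singleton_self v))]

end EdgeBoundary

theorem subprincipal_three_boundary_nested_or_disjoint_general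
    {V : Type*} [DecidableEq V]
    (T : Finset V) (E : Finset (Finset V))
    (hE2 : ∀ e ∈ E, e.card = 2)
    (hT : ∀ v ∈ T, (E.filter (fun e => v ∈ e)).card = 3)
    (hcond1 : ∀ A ⊆ T, 1 < A.card →
      3 ≤ (E.filter (fun e => (e ∩ A).card = 1)).card)
    (A A' : Finset V) (hA : A ⊆ T) (hA' : A' ⊆ T)
    (hA1 : 1 < A.card)
    (h3 : (E.filter (fun e => (e ∩ A).card = 1)).card = 3)
    (h3' : (E.filter (fun e => (e ∩ A').card = 1)).card = 3) :
    Disjoint A A' ∨ A ⊆ A' ∨ A' ⊆ A := by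
  by_contra hcross
  obtain ⟨hmeet, hAA', hA'A⟩ := by simpa only [not_or] using hcross
  change (edgeBoundary E A).card = 3 at h3
  change (edgeBoundary E A').card = 3 at h3'
  have hsdiff := three_le_card_edgeBoundary hT hcond1 (sdiff_subset.trans hA)
    (sdiff_nonempty.mpr hAA')
  have hsdiff' := three_le_card_edgeBoundary hT hcond1 (sdiff_subset.trans hA')
    (sdiff_nonempty.mpr hA'A)
  have hinter := three_le_card_edgeBoundary hT hcond1 (inter_subset_left.trans hA)
    (not_disjoint_iff_nonempty_inter.mp hmeet)
  have hunion : 3 ≤ (edgeBoundary E (A ∪ A')).card :=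
    hcond1 _ (union_subset hA hA') (hA1.trans_le (card_le_card subset_union_left))
  have hposimod := card_edgeBoundary_sdiff_add_card_edgeBoundary_sdiff_le hE2 A A'
  have hsubmod := card_edgeBoundary_inter_add_card_edgeBoundary_union_le hE2 A A'
  have hparity := card_edgeBoundary_add_card_edgeBoundary_of_disjoint hE2
    (disjoint_sdiff_inter A A')
  rw [sdiff_union_inter] at hparity
  omega

/-- In a diagram satisfying condition (1) of subprincipality
(`#E'_A ≥ 3` for all `A ⊆ T` with `#A > 1`), any two subsets `A, A' ⊆ T`
of size `> 1` with `#E'_A = #E'_{A'} = 3` are disjoint or nested. -/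
theorem subprincipal_three_boundary_nested_or_disjoint
    {V : Type*} [Fintype V] [DecidableEq V]
    (U T : Finset V) (E : Finset (Finset V))
    (hUT : Disjoint U T) (hcover : U ∪ T = Finset.univ)
    (hE2 : ∀ e ∈ E, e.card = 2)
    (hU : ∀ v ∈ U, (E.filter (fun e => v ∈ e)).card = 1)
    (hT : ∀ v ∈ T, (E.filter (fun e => v ∈ e)).card = 3)
    (hcond1 : ∀ A ⊆ T, 1 < A.card →
      3 ≤ (E.filter (fun e => (e ∩ A).card = 1)).card)
    (A A' : Finset V) (hA : A ⊆ T) (hA' : A' ⊆ T)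
    (hA1 : 1 < A.card) (hA'1 : 1 < A'.card)
    (h3 : (E.filter (fun e => (e ∩ A).card = 1)).card = 3)
    (h3' : (E.filter (fun e => (e ∩ A').card = 1)).card = 3) :
    Disjoint A A' ∨ A ⊆ A' ∨ A' ⊆ A :=
  subprincipal_three_boundary_nested_or_disjoint_general T E hE2 hT hcond1 A A' hA hA' hA1 h3 h3'
end

section
/- Let G = (V, E) be a connected finite graph with #V ≥ 2, and let R be the set of connected subsets A of V with #A ≥ 2. Let S ⊆ R be such that V ∈ S and any two elements of S are disjoint or nested. For A ∈ S, let A/S denote the graph obtained from the induced subgraph on A by collapsing the maximal elements of S strictly contained in A. Suppose for each A ∈ S we are given x_A ∈ C(A/S), i.e. a map on the vertices of A which is constant on each maximal element of S strictly inside A, separates the endpoints of each edge of A/S, and considered modulo translation-dilations. Then there exists a unique family (x̃_B)_{B ∈ R}, with each x̃_B a nonconstant map from B to ℝ³ modulo translation-dilations, extending the given family (in the sense that x̃_A = x_A for A ∈ S) and such that for all A ⊆ B in R, the restriction of x̃_B to A is either constant or equal to x̃_A. Moreover, for A ⊆ B in R, the restriction of x̃_B to A is constant if and only if the smallest element of S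 containing A differs from the smallest element of S containing B. -/
/-- `f` is constant on `B`. -/
def ConstOn {V : Type*} (B : Finset V) (f : V → Fin 3 → ℝ) : Prop :=
  ∀ v ∈ B, ∀ w ∈ B, f v = f w

/-- On `B`, `g` is obtained from `f` by a translation-dilation of `ℝ³`
(this is equality of the classes of the restrictions in `C^B`). -/
def TdEquivOn {V : Type*} (B : Finset V) (f g : V → Fin 3 → ℝ) : Prop :=
  ∃ l : ℝ, 0 < l ∧ ∃ b : Fin 3 → ℝ, ∀ v ∈ B, g v = l • f v + b

/-- Adjacency within a subset `A`: joined by an edge contained in `A`. -/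
def AdjOn {V : Type*} [DecidableEq V] (E : Finset (Finset V)) (A : Finset V)
    (v w : V) : Prop :=
  v ≠ w ∧ ∃ e ∈ E, e ⊆ A ∧ v ∈ e ∧ w ∈ e

/-- A subset `A` is connected if the induced subgraph `(A, E_A)` is connected. -/
def ConnOn {V : Type*} [DecidableEq V] (E : Finset (Finset V)) (A : Finset V) : Prop :=
  ∀ v ∈ A, ∀ w ∈ A, Relation.ReflTransGen (AdjOn E A) v w

/-- `A ∈ R`: a connected set of vertices of size `≥ 2`. -/
def MemR {V : Type*} [DecidableEq V] (E : Finset (Finset V)) (A : Finset V) : Prop :=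
  2 ≤ A.card ∧ ConnOn E A

/-- `B` is the smallest member of `S` containing `A`. -/
def IsSmallest {V : Type*} (S : Set (Finset V)) (A B : Finset V) : Prop :=
  B ∈ S ∧ A ⊆ B ∧ ∀ B' ∈ S, A ⊆ B' → B ⊆ B'

/-- `A'` is a maximal element of `S` strictly contained in `A`. -/
def MaxSub {V : Type*} (S : Set (Finset V)) (A A' : Finset V) : Prop :=
  A' ∈ S ∧ A' ⊂ A ∧ ∀ A'' ∈ S, A'' ⊂ A → A' ⊆ A'' → A'' = A'


section aux
variable {V : Type*}

lemma tdRefl (B : Finset V) (f : V → Fin 3 → ℝ) : TdEquivOn B f f :=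
  ⟨1, one_pos, 0, fun v _ => by simp⟩

lemma tdSymm {B : Finset V} {f g : V → Fin 3 → ℝ} (h : TdEquivOn B f g) :
    TdEquivOn B g f := by
  obtain ⟨l, hl, b, h⟩ := h
  refine ⟨l⁻¹, inv_pos.2 hl, -(l⁻¹ • b), fun v hv => ?_⟩
  rw [h v hv, smul_add, smul_smul, inv_mul_cancel₀ (ne_of_gt hl), one_smul]
  abel

lemma tdTrans {B : Finset V} {f g h : V → Fin 3 → ℝ}
    (h1 : TdEquivOn B f g) (h2 : TdEquivOn B g h) : TdEquivOn B f h := by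
  obtain ⟨l, hl, b, h1⟩ := h1
  obtain ⟨m, hm, c, h2⟩ := h2
  refine ⟨m * l, mul_pos hm hl, m • b + c, fun v hv => ?_⟩
  rw [h2 v hv, h1 v hv, smul_add, smul_smul]
  abel

lemma tdMono {A B : Finset V} {f g : V → Fin 3 → ℝ} (hAB : A ⊆ B)
    (h : TdEquivOn B f g) : TdEquivOn A f g := by
  obtain ⟨l, hl, b, h⟩ := h
  exact ⟨l, hl, b, fun v hv => h v (hAB hv)⟩

lemma tdConst {B : Finset V} {f g : V → Fin 3 → ℝ} (h : TdEquivOn B f g) :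
    ConstOn B f ↔ ConstOn B g := by
  obtain ⟨l, hl, b, h⟩ := h
  constructor
  · intro hc v hv w hw
    rw [h v hv, h w hw, hc v hv w hw]
  · intro hc v hv w hw
    have := hc v hv w hw
    rw [h v hv, h w hw, add_left_inj] at this
    exact smul_right_injective _ (ne_of_gt hl) this

lemma smallest_unique {S : Set (Finset V)} {A B C : Finset V}
    (h1 : IsSmallest S A B) (h2 : IsSmallest S A C) : B = C :=
  Finset.Subset.antisymm (h1.2.2 C h2.1 h2.2.1) (h2.2.2 B h1.1 h1.2.1)

lemma exists_smallest [Fintype V] [DecidableEq V] {S : Set (Finset V)}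
    (hVS : (Finset.univ : Finset V) ∈ S)
    (hlam : ∀ B ∈ S, ∀ B' ∈ S, Disjoint B B' ∨ B ⊆ B' ∨ B' ⊆ B)
    (B : Finset V) (hB : B.Nonempty) : ∃ C, IsSmallest S B C := by
  obtain ⟨C, hCT, hmin⟩ := Set.Finite.exists_minimalFor id
    {C : Finset V | C ∈ S ∧ B ⊆ C} (Set.toFinite _) ⟨Finset.univ, hVS, B.subset_univ⟩
  refine ⟨C, hCT.1, hCT.2, fun C' hC' hBC' => ?_⟩
  rcases hlam C hCT.1 C' hC' with hd | hsub | hsub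
  · obtain ⟨v, hv⟩ := hB
    exact absurd (hBC' hv) (Finset.disjoint_left.mp hd (hCT.2 hv))
  · exact hsub
  · exact hmin ⟨hC', hBC'⟩ hsub

/-- Key lemma: `x SB` is nonconstant on any `B ∈ R` whose smallest containing
member of `S` is `SB`. -/
lemma nonconst_key [Fintype V] [DecidableEq V]
    (E : Finset (Finset V)) (hE2 : ∀ e ∈ E, e.card = 2)
    {S : Set (Finset V)}
    (hlam : ∀ B ∈ S, ∀ B' ∈ S, Disjoint B B' ∨ B ⊆ B' ∨ B' ⊆ B)
    (x : Finset V → V → Fin 3 → ℝ)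
    (hxedge : ∀ A ∈ S, ∀ e ∈ E, e ⊆ A →
      (∀ A' : Finset V, MaxSub S A A' → ¬ e ⊆ A') →
      ∀ v ∈ e, ∀ w ∈ e, v ≠ w → x A v ≠ x A w)
    (B : Finset V) (hB : MemR E B) {SB : Finset V} (hSB : IsSmallest S B SB) :
    ¬ ConstOn B (x SB) := by
  intro hconst
  by_cases hgood : ∃ e ∈ E, e ⊆ B ∧ ∀ C ∈ S, C ⊂ SB → ¬ e ⊆ C
  · obtain ⟨e, he, heB, heC⟩ := hgood
    obtain ⟨v, w, hvw, rfl⟩ := Finset.card_eq_two.mp (hE2 e he)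
    have hv : v ∈ ({v, w} : Finset V) := by simp
    have hw : w ∈ ({v, w} : Finset V) := by simp
    exact hxedge SB hSB.1 _ he (heB.trans hSB.2.1)
      (fun A' hA' => heC A' hA'.1 hA'.2.1) v hv w hw hvw
      (hconst v (heB hv) w (heB hw))
  · push_neg at hgood
    obtain ⟨hcard, hconn⟩ := hB
    -- every edge inside B lies in a strict sub-member of SB
    obtain ⟨v, hv⟩ : ∃ v, v ∈ B := Finset.card_pos.mp (by omega)
    obtain ⟨w, hw, hwv⟩ := Finset.exists_mem_ne (s := B) (by omega) v
    rcases (hconn v hv w hw).cases_head with rfl | ⟨c, hvc, _⟩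
    · exact hwv rfl
    obtain ⟨_, e0, he0E, he0B, hve0, _⟩ := hvc
    obtain ⟨C0, hC0S, hC0sub, he0C0⟩ := hgood e0 he0E he0B
    obtain ⟨C, hCT, hmax⟩ := Set.Finite.exists_maximalFor id
      {C : Finset V | C ∈ S ∧ C ⊂ SB ∧ ∃ u ∈ B, u ∈ C} (Set.toFinite _)
      ⟨C0, hC0S, hC0sub, v, hv, he0C0 hve0⟩
    obtain ⟨hCS, hCsub, u, huB, huC⟩ := hCT
    have key : ∀ z, Relation.ReflTransGen (AdjOn E B) u z → z ∈ C := by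
      intro z h
      induction h with
      | refl => exact huC
      | tail _ hadj ih =>
        obtain ⟨_, e, heE, heB, hb, hc⟩ := hadj
        obtain ⟨C', hC'S, hC'sub, heC'⟩ := hgood e heE heB
        rcases hlam C hCS C' hC'S with hd | h1 | h2
        · exact absurd (heC' hb) (Finset.disjoint_left.mp hd ih)
        · have : C = C' := Finset.Subset.antisymm h1 (hmax ⟨hC'S, hC'sub, _, heB hb, heC' hb⟩ h1)
          exact this ▸ heC' hc
        · exact h2 (heC' hc)
    have hBC : B ⊆ C := fun z hz => key z (hconn u huB z hz)
    exact hCsub.not_subset (hSB.2.2 C hCS hBC)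

end aux

lemma const_on_sub {V : Type*} [Fintype V] [DecidableEq V] {S : Set (Finset V)}
    (x : Finset V → V → Fin 3 → ℝ)
    (hxconst : ∀ A ∈ S, ∀ A' : Finset V, MaxSub S A A' → ConstOn A' (x A))
    {CA CB : Finset V} (hCA : CA ∈ S) (hCB : CB ∈ S) (hss : CA ⊂ CB) :
    ConstOn CA (x CB) := by
  obtain ⟨C, hCT, hmax⟩ := Set.Finite.exists_maximalFor id
    {C : Finset V | C ∈ S ∧ CA ⊆ C ∧ C ⊂ CB} (Set.toFinite _)
    ⟨CA, hCA, subset_rfl, hss⟩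
  obtain ⟨hCS, hCAsub, hCsub⟩ := hCT
  have hmaxsub : MaxSub S CB C :=
    ⟨hCS, hCsub, fun A'' hA'' hA''sub hCA'' =>
      Finset.Subset.antisymm (hmax ⟨hA'', hCAsub.trans hCA'', hA''sub⟩ hCA'') hCA''⟩
  intro v hv w hw
  exact hxconst CB hCB C hmaxsub v (hCAsub hv) w (hCAsub hw)

/-- Lemma on strata, existence and uniqueness of `x̃`.
`G = (V,E)` is a connected graph, `S ⊆ R` a laminar family containing `V`.
Each `x_A` (`A ∈ S`) is a representative of an element of `C(A/S) ⊆ C^A`: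
constant on each maximal member of `S` strictly inside `A` and separating the
endpoints of each edge of the quotient `A/S`.  Then there is a family
`(x̃_B)_{B∈R}` of (classes of) nonconstant maps, extending `x` on `S`, whose
restrictions are compatible (restriction of `x̃_B` to `A ⊆ B` is constant or
equals `x̃_A`), the restriction of `x̃_B` to `A` being constant iff the
smallest members of `S` containing `A` and `B` differ; and such a family is
unique up to translation-dilation on each `B ∈ R`. -/
theorem strata_extension_exists_unique
    {V : Type*} [Fintype V] [DecidableEq V]
    (E : Finset (Finset V))
    (hE2 : ∀ e ∈ E, e.card = 2)
    (hVcard : 2 ≤ Fintype.card V)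
    (hGconn : ConnOn E Finset.univ)
    (S : Set (Finset V))
    (hVS : (Finset.univ : Finset V) ∈ S)
    (hSR : ∀ A ∈ S, MemR E A)
    (hlam : ∀ B ∈ S, ∀ B' ∈ S, Disjoint B B' ∨ B ⊆ B' ∨ B' ⊆ B)
    (x : Finset V → V → Fin 3 → ℝ)
    (hxconst : ∀ A ∈ S, ∀ A' : Finset V, MaxSub S A A' → ConstOn A' (x A))
    (hxedge : ∀ A ∈ S, ∀ e ∈ E, e ⊆ A →
      (∀ A' : Finset V, MaxSub S A A' → ¬ e ⊆ A') →
      ∀ v ∈ e, ∀ w ∈ e, v ≠ w → x A v ≠ x A w) :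
    ∃ xt : Finset V → V → Fin 3 → ℝ,
      (∀ A ∈ S, TdEquivOn A (x A) (xt A))
      ∧ (∀ B : Finset V, MemR E B → ¬ ConstOn B (xt B))
      ∧ (∀ A B : Finset V, MemR E A → MemR E B → A ⊆ B →
          (ConstOn A (xt B) ∨ TdEquivOn A (xt A) (xt B)))
      ∧ (∀ A B : Finset V, MemR E A → MemR E B → A ⊆ B →
          ∀ SA SB : Finset V, IsSmallest S A SA → IsSmallest S B SB →
            (ConstOn A (xt B) ↔ SA ≠ SB))
      ∧ (∀ xt' : Finset V → V → Fin 3 → ℝ,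
          (∀ A ∈ S, TdEquivOn A (x A) (xt' A)) →
          (∀ B : Finset V, MemR E B → ¬ ConstOn B (xt' B)) →
          (∀ A B : Finset V, MemR E A → MemR E B → A ⊆ B →
            (ConstOn A (xt' B) ∨ TdEquivOn A (xt' A) (xt' B))) →
          ∀ B : Finset V, MemR E B → TdEquivOn B (xt B) (xt' B)) := by
  have hne : ∀ B : Finset V, MemR E B → B.Nonempty := fun B hB =>
    Finset.card_pos.mp (by have := hB.1; omega)
  have hsm0 : ∀ B : Finset V, ∃ C, B.Nonempty → IsSmallest S B C := by
    intro B
    by_cases h : B.Nonempty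
    · obtain ⟨C, hC⟩ := exists_smallest hVS hlam B h
      exact ⟨C, fun _ => hC⟩
    · exact ⟨Finset.univ, fun h' => absurd h' h⟩
  choose sm hsm using hsm0
  have hsmS : ∀ A ∈ S, sm A = A := fun A hA =>
    smallest_unique (hsm A (hne A (hSR A hA))) ⟨hA, subset_rfl, fun _ _ h => h⟩
  have hconstAB : ∀ A B : Finset V, MemR E A → MemR E B → A ⊆ B →
      sm A ≠ sm B → ConstOn A (x (sm B)) := by
    intro A B hA hB hAB hne2
    have hA' := hsm A (hne A hA)
    have hB' := hsm B (hne B hB)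
    have hsub : sm A ⊆ sm B := hA'.2.2 (sm B) hB'.1 (hAB.trans hB'.2.1)
    have hss : sm A ⊂ sm B := Finset.ssubset_iff_subset_ne.mpr ⟨hsub, hne2⟩
    have hc := const_on_sub x hxconst hA'.1 hB'.1 hss
    intro v hv w hw
    exact hc v (hA'.2.1 hv) w (hA'.2.1 hw)
  refine ⟨fun B => x (sm B), ?_, ?_, ?_, ?_, ?_⟩
  · intro A hA
    show TdEquivOn A (x A) (x (sm A))
    rw [hsmS A hA]
    exact tdRefl A (x A)
  · intro B hB
    exact nonconst_key E hE2 hlam x hxedge B hB (hsm B (hne B hB))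
  · intro A B hA hB hAB
    by_cases heq : sm A = sm B
    · right
      show TdEquivOn A (x (sm A)) (x (sm B))
      rw [heq]
      exact tdRefl _ _
    · exact Or.inl (hconstAB A B hA hB hAB heq)
  · intro A B hA hB hAB SA SB hSA hSB
    have eA : SA = sm A := smallest_unique hSA (hsm A (hne A hA))
    have eB : SB = sm B := smallest_unique hSB (hsm B (hne B hB))
    rw [eA, eB]
    show ConstOn A (x (sm B)) ↔ sm A ≠ sm B
    constructor
    · intro hc heq2
      rw [← heq2] at hc
      exact nonconst_key E hE2 hlam x hxedge A hA (hsm A (hne A hA)) hc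
    · exact hconstAB A B hA hB hAB
  · intro xt' h1' _ h3' B hB
    have hB' := hsm B (hne B hB)
    have hSBS := hB'.1
    have hnc : ¬ ConstOn B (x (sm B)) :=
      nonconst_key E hE2 hlam x hxedge B hB hB'
    have h1B : TdEquivOn B (x (sm B)) (xt' (sm B)) := tdMono hB'.2.1 (h1' _ hSBS)
    rcases h3' B (sm B) hB (hSR _ hSBS) hB'.2.1 with hc | ht
    · exact absurd ((tdConst h1B).mpr hc) hnc
    · exact tdTrans h1B (tdSymm ht)
end

section
/- Let G = (V,E) be a connected finite graph with #V ≥ 2 and R the set of connected subsets of V of size ≥ 2. Let x = (x_A)_{A∈R} be a family with x_A ∈ C^A such that for all A ⊆ B in R, the restriction of x_B to A is either constant or equal to x_A. Then there is a unique laminar family S ⊆ R with V ∈ S (any two members disjoint or nested) such that for each A ∈ S, letting A₁,…,A_r be the maximal elements of S strictly inside A, the map x_A is constant on each A_i, is injective on the endpoints of every edge of the quotient graph A/{A₁,…,A_r}, and the connected components of size ≥ 2 of the fibers of x_A are exactly A₁,…,A_r. -/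
/-- `B` is a connected component of size `≥ 2` of a fiber of `f` inside `A`:
connected, contained in `A`, `f` is constant on `B`, and maximal as such. -/
def FiberComp {V : Type*} [DecidableEq V] (E : Finset (Finset V))
    (A B : Finset V) (f : V → Fin 3 → ℝ) : Prop :=
  B ⊆ A ∧ 2 ≤ B.card ∧ ConnOn E B ∧ ConstOn B f
    ∧ ∀ B' : Finset V, B ⊆ B' → B' ⊆ A → ConnOn E B' → ConstOn B' f → B' = B

section Aux

variable {V : Type*} [DecidableEq V]

/-- One step of the strata tree: `B` is a fiber component of `x A` in `A`. -/
def StrataStep (E : Finset (Finset V)) (x : Finset V → V → Fin 3 → ℝ)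
    (A B : Finset V) : Prop :=
  FiberComp E A B (x A)

theorem adjOn_mono {E : Finset (Finset V)} {A A' : Finset V} (h : A ⊆ A') {v w : V}
    (hadj : AdjOn E A v w) : AdjOn E A' v w := by
  obtain ⟨hne, e, he, hsub, hv, hw⟩ := hadj
  exact ⟨hne, e, he, hsub.trans h, hv, hw⟩

theorem adjOn_symm {E : Finset (Finset V)} {A : Finset V} : Symmetric (AdjOn E A) := by
  rintro a b ⟨hne, e, he, hsub, ha, hb⟩
  exact ⟨hne.symm, e, he, hsub, hb, ha⟩

theorem connOn_union {E : Finset (Finset V)} {B B' : Finset V} {v : V}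
    (hB : ConnOn E B) (hB' : ConnOn E B') (hv : v ∈ B) (hv' : v ∈ B') :
    ConnOn E (B ∪ B') := by
  have key : ∀ u ∈ B ∪ B', Relation.ReflTransGen (AdjOn E (B ∪ B')) u v := by
    intro u hu
    rcases Finset.mem_union.1 hu with h | h
    · exact Relation.ReflTransGen.mono (fun a b => adjOn_mono Finset.subset_union_left) u v (hB u h v hv)
    · exact Relation.ReflTransGen.mono (fun a b => adjOn_mono Finset.subset_union_right) u v (hB' u h v hv')
  intro u hu w hw
  exact (key u hu).trans (@Std.Symm.symm _ _ (@Relation.ReflTransGen.stdSymm _ _ ⟨fun a b h => adjOn_symm h⟩) _ _ (key w hw))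

theorem step_disjoint {E : Finset (Finset V)} {x : Finset V → V → Fin 3 → ℝ}
    {A B B' : Finset V} (h : StrataStep E x A B) (h' : StrataStep E x A B')
    (hne : B ≠ B') : Disjoint B B' := by
  by_contra hd
  obtain ⟨v, hvB, hvB'⟩ := Finset.not_disjoint_iff.1 hd
  obtain ⟨hBA, hB2, hBconn, hBconst, hBmax⟩ := h
  obtain ⟨hB'A, hB'2, hB'conn, hB'const, hB'max⟩ := h'
  have hU : ConnOn E (B ∪ B') := connOn_union hBconn hB'conn hvB hvB'
  have hconst : ConstOn (B ∪ B') (x A) := by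
    have hav : ∀ c ∈ B ∪ B', x A c = x A v := by
      intro c hc
      rcases Finset.mem_union.1 hc with h | h
      · exact hBconst c h v hvB
      · exact hB'const c h v hvB'
    intro a ha b hb
    rw [hav a ha, hav b hb]
  have h1 := hBmax (B ∪ B') Finset.subset_union_left (Finset.union_subset hBA hB'A) hU hconst
  have h2 := hB'max (B ∪ B') Finset.subset_union_right (Finset.union_subset hBA hB'A) hU hconst
  exact hne (h1.symm.trans h2)

theorem chain_sub {E : Finset (Finset V)} {x : Finset V → V → Fin 3 → ℝ}
    {C A : Finset V} (h : Relation.ReflTransGen (StrataStep E x) C A) : A ⊆ C := by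
  induction h with
  | refl => exact subset_rfl
  | tail _ hstep ih => exact hstep.1.trans ih

theorem memR_of_chain {E : Finset (Finset V)} {x : Finset V → V → Fin 3 → ℝ}
    {C A : Finset V} (hC : MemR E C)
    (h : Relation.ReflTransGen (StrataStep E x) C A) : MemR E A := by
  induction h with
  | refl => exact hC
  | tail _ hstep _ => exact ⟨hstep.2.1, hstep.2.2.1⟩

theorem step_ssub {E : Finset (Finset V)} {x : Finset V → V → Fin 3 → ℝ}
    {A B : Finset V} (hA : ¬ ConstOn A (x A)) (h : StrataStep E x A B) : B ⊂ A := by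
  refine Finset.ssubset_iff_subset_ne.2 ⟨h.1, fun he => hA ?_⟩
  exact he ▸ h.2.2.2.1

theorem chain_card2 {E : Finset (Finset V)} {x : Finset V → V → Fin 3 → ℝ}
    {C D : Finset V} (hC : 2 ≤ C.card)
    (h : Relation.ReflTransGen (StrataStep E x) C D) : 2 ≤ D.card := by
  induction h with
  | refl => exact hC
  | tail _ hstep _ => exact hstep.2.1

theorem chain_local {E : Finset (Finset V)} {x : Finset V → V → Fin 3 → ℝ}
    (hxnc : ∀ B : Finset V, MemR E B → ¬ ConstOn B (x B))
    {C A : Finset V} (hCA : Relation.ReflTransGen (StrataStep E x) C A) :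
    MemR E C → ∀ D, Relation.ReflTransGen (StrataStep E x) C D → D ⊆ A →
      Relation.ReflTransGen (StrataStep E x) A D := by
  induction hCA using Relation.ReflTransGen.head_induction_on with
  | refl => intro _ D hD _; exact hD
  | @head a c hstep htail ih =>
    intro ha D hCD hDA
    rcases hCD.cases_head with h | ⟨D₀, hD₀, htailD⟩
    · exfalso
      have h1 : A ⊆ c := chain_sub htail
      have h2 : c ⊂ a := step_ssub (hxnc a ha) hstep
      exact h2.2 (by rw [h]; exact hDA.trans h1)
    · by_cases hE : D₀ = c
      · subst hE
        exact ih ⟨hstep.2.1, hstep.2.2.1⟩ D htailD hDA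
      · exfalso
        have hdisj : Disjoint c D₀ := step_disjoint hstep hD₀ (fun h => hE h.symm)
        have hDc : D ⊆ c := hDA.trans (chain_sub htail)
        have hDD₀ : D ⊆ D₀ := chain_sub htailD
        have hD2 : 2 ≤ D.card := chain_card2 hD₀.2.1 htailD
        obtain ⟨v, hv⟩ := Finset.card_pos.1 (lt_of_lt_of_le two_pos hD2)
        exact (Finset.disjoint_left.1 hdisj (hDc hv)) (hDD₀ hv)

theorem chain_laminar {E : Finset (Finset V)} {x : Finset V → V → Fin 3 → ℝ}
    (hxnc : ∀ B : Finset V, MemR E B → ¬ ConstOn B (x B))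
    {C B : Finset V} (hCB : Relation.ReflTransGen (StrataStep E x) C B) :
    MemR E C → ∀ B', Relation.ReflTransGen (StrataStep E x) C B' →
      Disjoint B B' ∨ B ⊆ B' ∨ B' ⊆ B := by
  induction hCB using Relation.ReflTransGen.head_induction_on with
  | refl => intro _ B' hB'; right; right; exact chain_sub hB'
  | @head a c hstep htail ih =>
    intro ha B' hB'
    rcases hB'.cases_head with h | ⟨D₀, hD₀, htailD⟩
    · right; left
      exact (chain_sub htail).trans (h ▸ hstep.1)
    · by_cases hE : D₀ = c
      · subst hE
        exact ih ⟨hstep.2.1, hstep.2.2.1⟩ B' htailD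
      · left
        have hdisj : Disjoint c D₀ := step_disjoint hstep hD₀ (fun h => hE h.symm)
        exact hdisj.mono (chain_sub htail) (chain_sub htailD)

theorem exists_fiberComp {E : Finset (Finset V)} {A B₀ : Finset V} {f : V → Fin 3 → ℝ}
    [Fintype V]
    (hsub : B₀ ⊆ A) (h2 : 2 ≤ B₀.card) (hconn : ConnOn E B₀) (hconst : ConstOn B₀ f) :
    ∃ B, B₀ ⊆ B ∧ FiberComp E A B f := by
  classical
  set T : Set (Finset V) := {B | B₀ ⊆ B ∧ B ⊆ A ∧ ConnOn E B ∧ ConstOn B f} with hT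
  have hTne : T.Nonempty := ⟨B₀, subset_rfl, hsub, hconn, hconst⟩
  obtain ⟨B, hB, hmax⟩ := Set.Finite.exists_maximalFor Finset.card T (Set.toFinite T) hTne
  refine ⟨B, hB.1, hB.2.1, le_trans h2 (Finset.card_le_card hB.1), hB.2.2.1, hB.2.2.2, ?_⟩
  intro B' hBB' hB'A hB'conn hB'const
  have hB'T : B' ∈ T := ⟨hB.1.trans hBB', hB'A, hB'conn, hB'const⟩
  have := hmax hB'T (Finset.card_le_card hBB')
  exact (Finset.eq_of_subset_of_card_le hBB' this.ge).symm

end Aux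

/-- Lemma on strata, part (3).  Given a compatible family
`x = (x_A)_{A∈R}` of nonconstant maps modulo translation-dilations
(restriction of `x_B` to `A ⊆ B` constant or equal to `x_A`), there is a
unique laminar family `S ⊆ R` containing `V` such that for each `A ∈ S` the
maximal members of `S` strictly inside `A` are exactly the connected
components of size `≥ 2` of the fibers of `x_A`, and `x_A` separates the
endpoints of every edge of the quotient graph `A/S`. -/
theorem strata_detection_unique
    {V : Type*} [Fintype V] [DecidableEq V]
    (E : Finset (Finset V))
    (hE2 : ∀ e ∈ E, e.card = 2)
    (hVcard : 2 ≤ Fintype.card V)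
    (hGconn : ConnOn E Finset.univ)
    (x : Finset V → V → Fin 3 → ℝ)
    (hxnc : ∀ B : Finset V, MemR E B → ¬ ConstOn B (x B))
    (hxcompat : ∀ A B : Finset V, MemR E A → MemR E B → A ⊆ B →
      (ConstOn A (x B) ∨ TdEquivOn A (x A) (x B))) :
    ∃! S : Set (Finset V),
      (Finset.univ : Finset V) ∈ S
      ∧ (∀ A ∈ S, MemR E A)
      ∧ (∀ B ∈ S, ∀ B' ∈ S, Disjoint B B' ∨ B ⊆ B' ∨ B' ⊆ B)
      ∧ (∀ A ∈ S, ∀ B : Finset V, MaxSub S A B ↔ FiberComp E A B (x A))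
      ∧ (∀ A ∈ S, ∀ e ∈ E, e ⊆ A →
          (∀ B : Finset V, MaxSub S A B → ¬ e ⊆ B) →
          ∀ v ∈ e, ∀ w ∈ e, v ≠ w → x A v ≠ x A w) := by
  classical
  set S : Set (Finset V) :=
    {A | Relation.ReflTransGen (StrataStep E x) Finset.univ A} with hSdef
  have hunivR : MemR E (Finset.univ : Finset V) := ⟨by simpa using hVcard, hGconn⟩
  have hunivS : (Finset.univ : Finset V) ∈ S := Relation.ReflTransGen.refl
  have hmemS : ∀ A ∈ S, MemR E A := fun A hA => memR_of_chain hunivR hA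
  have hiff : ∀ A ∈ S, ∀ B : Finset V, MaxSub S A B ↔ FiberComp E A B (x A) := by
    intro A hA B
    constructor
    · rintro ⟨hBS, hBA, hmax⟩
      have hchain : Relation.ReflTransGen (StrataStep E x) A B :=
        chain_local hxnc hA hunivR B hBS hBA.subset
      rcases hchain.cases_head with h | ⟨D₀, hD₀, htail⟩
      · exact absurd h.symm hBA.ne
      · have hD₀S : D₀ ∈ S := hA.tail hD₀
        have hD₀A : D₀ ⊂ A := step_ssub (hxnc A (hmemS A hA)) hD₀
        have hEq := hmax D₀ hD₀S hD₀A (chain_sub htail)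
        exact hEq ▸ hD₀
    · intro hFC
      have hstep : StrataStep E x A B := hFC
      refine ⟨hA.tail hstep, step_ssub (hxnc A (hmemS A hA)) hstep, ?_⟩
      intro A'' hA''S hA''A hBA''
      have hchain : Relation.ReflTransGen (StrataStep E x) A A'' :=
        chain_local hxnc hA hunivR A'' hA''S hA''A.subset
      rcases hchain.cases_head with h | ⟨D₀, hD₀, htail⟩
      · exact absurd h.symm hA''A.ne
      · have hBD : B = D₀ := by
          by_contra hne
          have hdisj := step_disjoint hstep hD₀ hne
          have hBD₀ : B ⊆ D₀ := hBA''.trans (chain_sub htail)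
          obtain ⟨v, hv⟩ := Finset.card_pos.1 (lt_of_lt_of_le two_pos hFC.2.1)
          exact (Finset.disjoint_left.1 hdisj hv) (hBD₀ hv)
        exact subset_antisymm (hBD ▸ chain_sub htail) hBA''
  have hsep : ∀ A ∈ S, ∀ e ∈ E, e ⊆ A →
      (∀ B : Finset V, MaxSub S A B → ¬ e ⊆ B) →
      ∀ v ∈ e, ∀ w ∈ e, v ≠ w → x A v ≠ x A w := by
    intro A hA e he heA hnB v hv w hw hvw heq
    have hvw' : ({v, w} : Finset V) ⊆ e := by
      intro u hu
      rcases Finset.mem_insert.1 hu with h | h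
      · exact h ▸ hv
      · exact (Finset.mem_singleton.1 h) ▸ hw
    have hevw : ({v, w} : Finset V) = e := by
      apply Finset.eq_of_subset_of_card_le hvw'
      rw [hE2 e he, Finset.card_insert_of_notMem (by simpa using hvw), Finset.card_singleton]
    have hconst : ConstOn e (x A) := by
      intro a ha b hb
      have hmem : ∀ u ∈ e, x A u = x A v := by
        intro u hu
        rw [← hevw] at hu
        rcases Finset.mem_insert.1 hu with h | h
        · rw [h]
        · rw [Finset.mem_singleton.1 h, ← heq]
      rw [hmem a ha, hmem b hb]
    have hconn : ConnOn E e := by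
      intro a ha b hb
      by_cases hab : a = b
      · exact hab ▸ Relation.ReflTransGen.refl
      · exact Relation.ReflTransGen.single ⟨hab, e, he, subset_rfl, ha, hb⟩
    have h2 : 2 ≤ e.card := (hE2 e he).ge
    obtain ⟨B, heB, hFC⟩ := exists_fiberComp heA h2 hconn hconst
    exact hnB B ((hiff A hA B).2 hFC) heB
  refine ⟨S, ⟨hunivS, hmemS, ?_, hiff, hsep⟩, ?_⟩
  · intro B hB B' hB'
    exact chain_laminar hxnc hB hunivR B' hB'
  · rintro S' ⟨hS'univ, hS'memR, _, hS'iff, _⟩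
    have h1 : ∀ C, Relation.ReflTransGen (StrataStep E x) Finset.univ C → C ∈ S' := by
      intro C hC
      induction hC with
      | refl => exact hS'univ
      | tail _ hstep ih => exact ((hS'iff _ ih _).2 hstep).1
    have h2 : ∀ n : ℕ, ∀ A : Finset V, A ∈ S' → A.card ≤ n →
        Relation.ReflTransGen (StrataStep E x) Finset.univ A →
        ∀ C, C ∈ S' → C ⊆ A → Relation.ReflTransGen (StrataStep E x) Finset.univ C := by
      intro n
      induction n with
      | zero =>
        intro A hA hcard _ C hC hCA
        exact absurd (hS'memR A hA).1 (by omega)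
      | succ n ih =>
        intro A hA hcard hchain C hC hCA
        by_cases hEq : C = A
        · exact hEq ▸ hchain
        · have hCA' : C ⊂ A := ssubset_of_subset_of_ne hCA hEq
          set T : Set (Finset V) := {B | B ∈ S' ∧ C ⊆ B ∧ B ⊂ A} with hT
          obtain ⟨B, hB, hmax⟩ := Set.Finite.exists_maximalFor Finset.card T
            (Set.toFinite T) ⟨C, hC, subset_rfl, hCA'⟩
          have hMS : MaxSub S' A B := by
            refine ⟨hB.1, hB.2.2, ?_⟩
            intro A'' hA'' hA''A hBA''
            have hA''T : A'' ∈ T := ⟨hA'', hB.2.1.trans hBA'', hA''A⟩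
            have hc := hmax hA''T (Finset.card_le_card hBA'')
            exact (Finset.eq_of_subset_of_card_le hBA'' hc.ge).symm
          have hFC : FiberComp E A B (x A) := (hS'iff A hA B).1 hMS
          have hchainB : Relation.ReflTransGen (StrataStep E x) Finset.univ B :=
            hchain.tail hFC
          have hcardB : B.card ≤ n := by
            have := Finset.card_lt_card hB.2.2
            omega
          exact ih B hB.1 hcardB hchainB C hC hB.2.1
    apply Set.Subset.antisymm
    · intro C hC
      exact h2 (Finset.univ.card) Finset.univ hS'univ le_rfl Relation.ReflTransGen.refl
        C hC (Finset.subset_univ C)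
    · intro C hC
      exact h1 C hC
end
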